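/- arXiv:1305.3447 — 2 statements merged into one kernel-verified Lean document; each statement's English description precedes it below -/
import Mathlib

section
/- Let (C,R) be a directed graph with ℓ = t = 1 that is not strongly connected and has |C'| = 1, and let h : C → ℝ be arbitrary. For i ∈ C'' let U(i) = {k ∈ C : every directed path from k to C' traverses i}, and for j ∈ C'' let C''_{j-inarb} be as defined below. Then the following are equivalent: (A) for all j ∈ C'' and all U ∈ C''_{j-inarb}, ∑_{i ∈ U} h_i ≤ 0; (B) for all i ∈ C'', ∑_{k ∈ U(i)} h_k ≤ 0. -/
open Finset

/-- Reachability (existence of a directed walk) in the directed graph with arc set `R`. -/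
def Reach {c : ℕ} (R : Finset (Fin c × Fin c)) (a b : Fin c) : Prop :=
  Relation.ReflTransGen (fun x y => (x, y) ∈ R) a b

/-- `p` is a directed path in the graph with arc set `R`. -/
def IsDipath {c : ℕ} (R : Finset (Fin c × Fin c)) (p : List (Fin c)) : Prop :=
  p ≠ [] ∧ p.Nodup ∧ p.Chain' (fun a b => (a, b) ∈ R)

/-- `p` is a directed path from `a` to `b` in the graph with arc set `R`. -/
def IsDipathFromTo {c : ℕ} (R : Finset (Fin c × Fin c)) (p : List (Fin c))
    (a b : Fin c) : Prop :=
  IsDipath R p ∧ p.head? = some a ∧ p.getLast? = some b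

/-- There is a directed path from `a` to `b` all of whose intermediate steps stay in `S`
(for `a ∈ S` this says that there is a directed path from `a` to `b` with vertex set
contained in `S`). -/
def ReachIn {c : ℕ} (R : Finset (Fin c × Fin c)) (S : Finset (Fin c))
    (a b : Fin c) : Prop :=
  Relation.ReflTransGen (fun x y => (x, y) ∈ R ∧ x ∈ S ∧ y ∈ S) a b

/-- The set of arcs of `R` entering the vertex set `U`. -/
def arcsIn {c : ℕ} (R : Finset (Fin c × Fin c)) (U : Finset (Fin c)) :
    Finset (Fin c × Fin c) :=
  R.filter (fun a => a.1 ∉ U ∧ a.2 ∈ U)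

/-- The set of arcs of `R` leaving the vertex set `U`. -/
def arcsOut {c : ℕ} (R : Finset (Fin c × Fin c)) (U : Finset (Fin c)) :
    Finset (Fin c × Fin c) :=
  R.filter (fun a => a.1 ∈ U ∧ a.2 ∉ U)

/-- For a graph whose unique absorbing strong component is `{r}` (so `C'' = C \ {r}`),
`Uset R r i = U(i) = {k ∈ C : every directed path from k to r traverses i}`. -/
noncomputable def Uset {c : ℕ} (R : Finset (Fin c × Fin c)) (r i : Fin c) :
    Finset (Fin c) :=
  @Finset.filter _ (fun k => ∀ p : List (Fin c), IsDipathFromTo R p k r → i ∈ p)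
    (Classical.decPred _) Finset.univ

/-- `U ∈ C''_{j-inarb}`: `U ⊆ C'' = C \ {r}`, every vertex of `U` has a directed path to
`j` with vertex set contained in `U`, and every vertex of `C'' \ U` has a directed path
to `C' = {r}` with vertex set contained in `C \ U`. -/
def Jinarb {c : ℕ} (R : Finset (Fin c × Fin c)) (r j : Fin c)
    (U : Finset (Fin c)) : Prop :=
  U ⊆ Finset.univ.erase r ∧
    (∀ i' ∈ U, ReachIn R U i' j) ∧
    (∀ i' ∈ Finset.univ.erase r \ U, ReachIn R (Finset.univ \ U) i' r)

/-- The vertex set of the strong component of the graph containing `j`. -/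
noncomputable def SCC {c : ℕ} (R : Finset (Fin c × Fin c)) (j : Fin c) :
    Finset (Fin c) :=
  @Finset.filter _ (fun k => Reach R j k ∧ Reach R k j) (Classical.decPred _) Finset.univ

/-- `I` is a subset of `C'' = C \ {r}` such that the sets `U(i)`, `i ∈ I`, are pairwise
disjoint with union `U`. -/
def IsPartitionInto {c : ℕ} (R : Finset (Fin c × Fin c)) (r : Fin c)
    (U I : Finset (Fin c)) : Prop :=
  I ⊆ Finset.univ.erase r ∧
    (↑I : Set (Fin c)).PairwiseDisjoint (fun i => Uset R r i) ∧
    U = I.biUnion (Uset R r)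

/-- `W(j) = ⋃_{U ∈ C''_{j-inarb}} I_U`, where `I_U` is the unique subset of `C''` with
`U = ⋃*_{i ∈ I_U} U(i)` (pairwise disjoint union). -/
def Wset {c : ℕ} (R : Finset (Fin c × Fin c)) (r j : Fin c) : Set (Fin c) :=
  {i | ∃ U I : Finset (Fin c), Jinarb R r j U ∧ IsPartitionInto R r U I ∧ i ∈ I}

/-- `U(C''(j)) = {k ∈ C'' : every directed path from k to r traverses C''(j)}`. -/
noncomputable def UsetSC {c : ℕ} (R : Finset (Fin c × Fin c)) (r j : Fin c) :
    Finset (Fin c) :=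
  @Finset.filter _
    (fun k => ∀ p : List (Fin c), IsDipathFromTo R p k r → ∃ x ∈ p, x ∈ SCC R j)
    (Classical.decPred _) (Finset.univ.erase r)

/-!
For `i ≠ r`, a vertex `k` lies in `U(i)` iff every walk (not just every path) from `k` to `r`
meets `i`. Hence `U(i)` is closed under arcs leaving its vertices other than `i`, and walking
from `k ∈ U(i)` towards `r` one must pass through `i` without leaving `U(i)`. This gives
`U(i) ∈ C''_{i-inarb}`, so (A) implies (B). Conversely, every `U ∈ C''_{j-inarb}` contains
`U(i)` for each `i ∈ U`, and the sets `U(i)` form a laminar family, so `U` is the disjoint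
union of its maximal sets `U(i)` and (B) implies (A).
-/

namespace List

variable {α : Type*} {r : α → α → Prop} {a b : α}

theorem reflTransGen_of_isChain {l : List α} (hl : l.IsChain r) (ha : l.head? = some a)
    (hb : l.getLast? = some b) : Relation.ReflTransGen r a b := by
  cases l with
  | nil => simp at ha
  | cons x t =>
    obtain rfl : x = a := by simpa using ha
    exact relationReflTransGen_of_exists_isChain_cons t hl
      (by simpa [getLast?_eq_some_getLast] using hb)

theorem exists_nodup_isChain_of_reflTransGen (h : Relation.ReflTransGen r a b) :
    ∃ l : List α, l.Nodup ∧ l.IsChain r ∧ l.head? = some a ∧ l.getLast? = some b := by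
  classical
  induction h using Relation.ReflTransGen.head_induction_on with
  | refl => exact ⟨[b], nodup_singleton b, .singleton b, rfl, rfl⟩
  | @head x y hxy _ ih =>
    obtain ⟨l, hnd, hch, hhd, hlast⟩ := ih
    by_cases hx : x ∈ l
    · obtain ⟨s, t, rfl⟩ := append_of_mem hx
      have hsuf : x :: t <:+ s ++ x :: t := suffix_append s (x :: t)
      refine ⟨x :: t, hnd.sublist hsuf.sublist, hch.suffix hsuf, rfl, ?_⟩
      rwa [getLast?_append_of_ne_nil _ (cons_ne_nil x t)] at hlast
    · refine ⟨x :: l, nodup_cons.mpr ⟨hx, hnd⟩, hch.cons (by simp [hhd, hxy]), rfl, ?_⟩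
      rw [getLast?_cons, hlast]
      rfl

end List

namespace Relation.ReflTransGen

variable {α : Type*} {r : α → α → Prop} {a b : α}

theorem restrict_reaching (h : ReflTransGen r a b) :
    ReflTransGen (fun x y => r x y ∧ ReflTransGen r x b ∧ ReflTransGen r y b) a b := by
  induction h using head_induction_on with
  | refl => exact refl
  | head hxy hyb ih => exact head ⟨hxy, head hxy hyb, hyb⟩ ih

theorem exists_exit {p q : α → Prop} (h : ReflTransGen r a b) (ha : p a) (hb : ¬ p b)
    (hexit : ∀ x y, r x y → p x → ¬ q x → p y) :
    ∃ e, p e ∧ q e ∧ ReflTransGen (fun x y => r x y ∧ p x ∧ p y) a e ∧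
      ReflTransGen r e b := by
  induction h using head_induction_on with
  | refl => exact absurd ha hb
  | @head x y hxy hyb ih =>
    by_cases hx : q x
    · exact ⟨x, ha, hx, refl, head hxy hyb⟩
    · have hy := hexit x y hxy ha hx
      obtain ⟨e, hpe, hqe, hye, heb⟩ := ih hy
      exact ⟨e, hpe, hqe, head ⟨hxy, ha, hy⟩ hye, heb⟩

end Relation.ReflTransGen

theorem Finset.sum_nonpos_of_laminar {α M : Type*} [DecidableEq α] [AddCommMonoid M]
    [PartialOrder M] [IsOrderedAddMonoid M] (S : α → Finset α) (f : α → M) (U : Finset α)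
    (hself : ∀ a ∈ U, a ∈ S a)
    (hlam : ∀ a ∈ U, ∀ b ∈ U, ∀ x ∈ S a, x ∈ S b → S a ⊆ S b ∨ S b ⊆ S a)
    (hnonpos : ∀ a ∈ U, ∑ x ∈ S a, f x ≤ 0) (hclosed : ∀ a ∈ U, S a ⊆ U) :
    ∑ x ∈ U, f x ≤ 0 := by
  induction U using Finset.strongInduction with
  | H U ih =>
    rcases U.eq_empty_or_nonempty with rfl | hne
    · simp
    obtain ⟨i, hiU, hmax⟩ := U.exists_max_image (fun a => (S a).card) hne
    -- a block meeting the maximal `S i` lies inside it, so `U \ S i` is again closed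
    have hrest : ∀ a ∈ U \ S i, S a ⊆ U \ S i := by
      intro a ha x hxa
      obtain ⟨haU, hai⟩ := mem_sdiff.mp ha
      refine mem_sdiff.mpr ⟨hclosed a haU hxa, fun hxi => ?_⟩
      rcases hlam a haU i hiU x hxa hxi with hsub | hsub
      · exact hai (hsub (hself a haU))
      · exact hai (eq_of_subset_of_card_le hsub (hmax a haU) ▸ hself a haU)
    have hlt : U \ S i ⊂ U := sdiff_ssubset (hclosed i hiU) ⟨i, hself i hiU⟩
    have hU : ∑ x ∈ U \ S i, f x ≤ 0 :=
      ih _ hlt (fun a ha => hself a (mem_sdiff.mp ha).1)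
        (fun a ha b hb => hlam a (mem_sdiff.mp ha).1 b (mem_sdiff.mp hb).1)
        (fun a ha => hnonpos a (mem_sdiff.mp ha).1) hrest
    calc ∑ x ∈ U, f x = ∑ x ∈ U \ S i, f x + ∑ x ∈ S i, f x :=
          (sum_sdiff (hclosed i hiU)).symm
      _ ≤ 0 := add_nonpos hU (hnonpos i hiU)

section Dominators

variable {c : ℕ} {R : Finset (Fin c × Fin c)} {r i i' j k x y : Fin c}

theorem mem_Uset :
    k ∈ Uset R r i ↔ ∀ p : List (Fin c), IsDipathFromTo R p k r → i ∈ p := by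
  simp [Uset]

theorem mem_Uset_self : i ∈ Uset R r i :=
  mem_Uset.mpr fun _ hp => List.mem_of_mem_head? hp.2.1

theorem mem_Uset_iff_not_reachIn (hir : i ≠ r) :
    k ∈ Uset R r i ↔ ¬ ReachIn R (univ.erase i) k r := by
  constructor
  · intro hk hwalk
    obtain ⟨p, hnd, hch, hhd, hlast⟩ := List.exists_nodup_isChain_of_reflTransGen hwalk
    have hip : i ∉ p := fun hip =>
      hch.backwards_induction (· ≠ i) p (fun _ _ hxy _ => (mem_erase.mp hxy.2.1).1)
        (fun hne => by
          rw [List.getLast?_eq_some_getLast hne, Option.some_inj] at hlast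
          exact hlast ▸ hir.symm) i hip rfl
    exact hip (mem_Uset.mp hk p
      ⟨⟨List.ne_nil_of_mem (List.mem_of_mem_head? hhd), hnd, hch.imp fun _ _ h => h.1⟩,
        hhd, hlast⟩)
  · intro hwalk
    refine mem_Uset.mpr fun p hp => ?_
    by_contra hip
    have hne : ∀ x ∈ p, x ∈ univ.erase i := fun x hx =>
      mem_erase.mpr ⟨fun h => hip (h ▸ hx), mem_univ x⟩
    exact hwalk (List.reflTransGen_of_isChain
      (hp.1.2.2.imp_of_mem_imp fun a b ha hb hab => ⟨hab, hne a ha, hne b hb⟩) hp.2.1 hp.2.2)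

theorem root_notMem_Uset (hir : i ≠ r) : r ∉ Uset R r i := fun h =>
  (mem_Uset_iff_not_reachIn hir).mp h .refl

theorem mem_Uset_of_arc (hir : i ≠ r) (hx : x ∈ Uset R r i) (hxi : x ≠ i)
    (hxy : (x, y) ∈ R) : y ∈ Uset R r i := by
  by_cases hyi : y = i
  · exact hyi ▸ mem_Uset_self
  rw [mem_Uset_iff_not_reachIn hir] at hx ⊢
  exact fun hy => hx (.head ⟨hxy, mem_erase.mpr ⟨hxi, mem_univ x⟩,
    mem_erase.mpr ⟨hyi, mem_univ y⟩⟩ hy)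

theorem reachIn_Uset (hreach : ∀ k : Fin c, Reach R k r) (hir : i ≠ r)
    (hk : k ∈ Uset R r i) : ReachIn R (Uset R r i) k i := by
  obtain ⟨e, -, rfl, hke, -⟩ := (hreach k).exists_exit (q := (· = i)) hk
    (root_notMem_Uset hir) fun _ _ hxy hx hxi => mem_Uset_of_arc hir hx hxi hxy
  exact hke

theorem reachIn_compl_Uset (hir : i ≠ r) (hx : x ∉ Uset R r i) :
    ReachIn R (univ \ Uset R r i) x r := by
  have hwalk : ReachIn R (univ.erase i) x r :=
    not_not.mp (mt (mem_Uset_iff_not_reachIn hir).mpr hx)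
  refine Relation.ReflTransGen.mono (fun y z ⟨hyz, hy, hz⟩ => ⟨hyz.1, ?_, ?_⟩) _ _
    hwalk.restrict_reaching
  · exact mem_sdiff.mpr ⟨mem_univ y, fun h => (mem_Uset_iff_not_reachIn hir).mp h hy⟩
  · exact mem_sdiff.mpr ⟨mem_univ z, fun h => (mem_Uset_iff_not_reachIn hir).mp h hz⟩

theorem Uset_subset_Uset (hir : i ≠ r) (hi'r : i' ≠ r) (h : i ∈ Uset R r i') :
    Uset R r i ⊆ Uset R r i' := by
  intro x hx
  rw [mem_Uset_iff_not_reachIn hi'r]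
  intro hwalk
  obtain ⟨e, -, rfl, -, hei⟩ := hwalk.exists_exit (q := (· = i)) hx (root_notMem_Uset hir)
    fun _ _ hxy hx hxi => mem_Uset_of_arc hir hx hxi hxy.1
  exact (mem_Uset_iff_not_reachIn hi'r).mp h hei

theorem Uset_laminar (hreach : ∀ k : Fin c, Reach R k r) (hir : i ≠ r) (hi'r : i' ≠ r)
    (hx : x ∈ Uset R r i) (hx' : x ∈ Uset R r i') :
    Uset R r i ⊆ Uset R r i' ∨ Uset R r i' ⊆ Uset R r i := by
  obtain ⟨e, ⟨he, he'⟩, rfl | rfl, -⟩ := (hreach x).exists_exit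
    (p := fun y => y ∈ Uset R r i ∧ y ∈ Uset R r i') (q := fun y => y = i ∨ y = i')
    ⟨hx, hx'⟩ (fun h => root_notMem_Uset hir h.1) fun _ _ hyz hy hq =>
      ⟨mem_Uset_of_arc hir hy.1 (fun h => hq (.inl h)) hyz,
        mem_Uset_of_arc hi'r hy.2 (fun h => hq (.inr h)) hyz⟩
  · exact .inl (Uset_subset_Uset hir hi'r he')
  · exact .inr (Uset_subset_Uset hi'r hir he)

theorem jinarb_Uset (hreach : ∀ k : Fin c, Reach R k r) (hir : i ≠ r) :
    Jinarb R r i (Uset R r i) :=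
  ⟨fun k hk => mem_erase.mpr ⟨ne_of_mem_of_not_mem hk (root_notMem_Uset hir), mem_univ k⟩,
    fun _ hk => reachIn_Uset hreach hir hk,
    fun _ hx => reachIn_compl_Uset hir (mem_sdiff.mp hx).2⟩

theorem Uset_subset_of_jinarb {U : Finset (Fin c)} (hU : Jinarb R r j U) (hi : i ∈ U) :
    Uset R r i ⊆ U := by
  have hir : i ≠ r := (mem_erase.mp (hU.1 hi)).1
  intro x hx
  by_contra hxU
  have hxr : x ≠ r := ne_of_mem_of_not_mem hx (root_notMem_Uset hir)
  have hwalk := hU.2.2 x (mem_sdiff.mpr ⟨mem_erase.mpr ⟨hxr, mem_univ x⟩, hxU⟩)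
  have hsub : univ \ U ⊆ univ.erase i := fun y hy =>
    mem_erase.mpr ⟨fun he => (mem_sdiff.mp hy).2 (he ▸ hi), mem_univ y⟩
  exact (mem_Uset_iff_not_reachIn hir).mp hx <|
    Relation.ReflTransGen.mono (fun _ _ h => ⟨h.1, hsub h.2.1, hsub h.2.2⟩) _ _ hwalk

end Dominators

theorem stmt13_general {c : ℕ}
    (R : Finset (Fin c × Fin c))
    -- `{r} = C'` is the vertex set of the unique absorbing strong component (`ℓ = t = 1`):
    (r : Fin c)
    (hreach : ∀ k : Fin c, Reach R k r)
    (h : Fin c → ℝ) :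
    (∀ j : Fin c, j ≠ r → ∀ U : Finset (Fin c), Jinarb R r j U → ∑ i ∈ U, h i ≤ 0) ↔
      (∀ i : Fin c, i ≠ r → ∑ k ∈ Uset R r i, h k ≤ 0) := by
  constructor
  · exact fun hA i hir => hA i hir _ (jinarb_Uset hreach hir)
  · intro hB j _ U hU
    have hne : ∀ i ∈ U, i ≠ r := fun i hi => (mem_erase.mp (hU.1 hi)).1
    exact sum_nonpos_of_laminar (Uset R r) h U (fun _ _ => mem_Uset_self)
      (fun i hi i' hi' _ hx hx' => Uset_laminar hreach (hne i hi) (hne i' hi') hx hx')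
      (fun i hi => hB i (hne i hi)) (fun _ hi => Uset_subset_of_jinarb hU hi)

theorem stmt13 {c : ℕ}
    (R : Finset (Fin c × Fin c)) (hloop : ∀ v : Fin c, (v, v) ∉ R)
    -- `{r} = C'` is the vertex set of the unique absorbing strong component (`ℓ = t = 1`):
    (r : Fin c)
    (habs : ∀ p ∈ R, p.1 ≠ r)
    (hreach : ∀ k : Fin c, Reach R k r)
    (hweak : ∀ a b : Fin c,
      Relation.ReflTransGen (fun x y => (x, y) ∈ R ∨ (y, x) ∈ R) a b)
    (hnsc : ¬ ∀ a b : Fin c, Reach R a b)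
    (h : Fin c → ℝ) :
    (∀ j : Fin c, j ≠ r → ∀ U : Finset (Fin c), Jinarb R r j U → ∑ i ∈ U, h i ≤ 0) ↔
      (∀ i : Fin c, i ≠ r → ∑ k ∈ Uset R r i, h k ≤ 0) :=
  stmt13_general R r hreach h
end

section
/- Let (C,R) be a directed graph with ℓ = t = 1 that is not strongly connected and has |C'| = 1. Let j ∈ C'' be such that some arc with tail j leaves the strong component C''(j) containing j (i.e., ϱ^out({j}) ∩ ϱ^out(C''(j)) ≠ ∅). Then W(j) ⊆ W(j') for every j' ∈ C''(j). -/
open Finset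

/-!
Given `U ∈ C''_{j-inarb}` with decomposition `I_U`, enlarge it to the set `D` of vertices all of
whose walks to `C'` meet `U ∪ C''(j)`. Every vertex of `D` reaches `U ∪ C''(j)` inside `D`, hence
reaches every `j' ∈ C''(j)` inside `D`, while every vertex outside `D` escapes to `C'` outside `D`;
so `D ∈ C''_{j'-inarb}`. The new part `D \ U` is closed under `s ↦ U(s)`: a vertex of `U`
dominated by some `s ∉ U` would put `s` into `C''(j)`, contradicting the arc that leaves `C''(j)`
at `j`. The maximal dominators in `D \ U` together with `I_U` then decompose `D`, so
`I_U ⊆ I_D ⊆ W(j')`.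
-/

section Paths

variable {c : ℕ} {R : Finset (Fin c × Fin c)} {S : Finset (Fin c)} {p q t : List (Fin c)}
  {a b x : Fin c}

lemma ReachIn.mono {T : Finset (Fin c)} (hST : S ⊆ T) (h : ReachIn R S a b) : ReachIn R T a b := by
  induction h with
  | refl => exact .refl
  | tail _ hxy ih => exact .tail ih ⟨hxy.1, hST hxy.2.1, hST hxy.2.2⟩

lemma ReachIn.reach (h : ReachIn R S a b) : Reach R a b := by
  induction h with
  | refl => exact .refl
  | tail _ hxy ih => exact .tail ih hxy.1

lemma Reach.reachIn_univ (h : Reach R a b) : ReachIn R univ a b := by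
  induction h with
  | refl => exact .refl
  | tail _ hxy ih => exact .tail ih ⟨hxy, mem_univ _, mem_univ _⟩

lemma ReachIn.eq_of_notMem (h : ReachIn R S a b) (ha : a ∉ S) : a = b := by
  rcases Relation.ReflTransGen.cases_head h with h | ⟨_, hax, _⟩
  · exact h
  · exact absurd hax.2.1 ha

lemma ReachIn.mem_of_mem (h : ReachIn R S a b) (ha : a ∈ S) : b ∈ S := by
  induction h with
  | refl => exact ha
  | tail _ hxy => exact hxy.2.2

lemma reachIn_split {T : Finset (Fin c)} (h : ReachIn R S a b) (hT : ¬ ReachIn R (S \ T) a b) :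
    ∃ z ∈ T, ReachIn R S a z ∧ ReachIn R S z b := by
  induction h using Relation.ReflTransGen.head_induction_on with
  | refl => exact absurd .refl hT
  | @head a x hax hxb ih =>
    by_cases haT : a ∈ T
    · exact ⟨a, haT, .refl, .head hax hxb⟩
    by_cases hxT : x ∈ T
    · exact ⟨x, hxT, .single hax, hxb⟩
    have hx : ¬ ReachIn R (S \ T) x b := fun w =>
      hT (.head ⟨hax.1, mem_sdiff.2 ⟨hax.2.1, haT⟩, mem_sdiff.2 ⟨hax.2.2, hxT⟩⟩ w)
    obtain ⟨z, hz, hxz, hzb⟩ := ih hx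
    exact ⟨z, hz, .head hax hxz, hzb⟩

lemma IsDipathFromTo.reachIn (h : IsDipathFromTo R p a b) (hS : ∀ x ∈ p, x ∈ S) :
    ReachIn R S a b := by
  obtain ⟨⟨hne, -, hch⟩, hhd, hlast⟩ := h
  rw [List.head?_eq_some_head hne, Option.some_inj] at hhd
  rw [List.getLast?_eq_some_getLast hne, Option.some_inj] at hlast
  subst hhd hlast
  exact List.relationReflTransGen_of_exists_isChain p
    (List.IsChain.imp_of_mem_imp (fun x y hx hy hxy => ⟨hxy, hS x hx, hS y hy⟩) hch) hne

lemma IsDipathFromTo.prefix (h : IsDipathFromTo R (q ++ x :: t) a b) :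
    IsDipathFromTo R (q ++ [x]) a x := by
  obtain ⟨⟨-, hnd, hch⟩, hhd, -⟩ := h
  have hpre : q ++ [x] <+: q ++ x :: t := ⟨t, by simp⟩
  refine ⟨⟨by simp, hnd.sublist hpre.sublist, List.IsChain.prefix hch hpre⟩, ?_, by simp⟩
  cases q <;> simpa using hhd

lemma IsDipathFromTo.suffix (h : IsDipathFromTo R (q ++ x :: t) a b) :
    IsDipathFromTo R (x :: t) x b := by
  obtain ⟨⟨-, hnd, hch⟩, -, hlast⟩ := h
  refine ⟨⟨List.cons_ne_nil _ _, hnd.sublist (List.sublist_append_right _ _),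
    List.IsChain.suffix hch (List.suffix_append _ _)⟩, rfl, ?_⟩
  rwa [List.getLast?_append_of_ne_nil _ (List.cons_ne_nil _ _)] at hlast

lemma IsDipathFromTo.concat (h : IsDipathFromTo R p a b) (hbx : (b, x) ∈ R) (hx : x ∉ p) :
    IsDipathFromTo R (p ++ [x]) a x := by
  obtain ⟨⟨hne, hnd, hch⟩, hhd, hlast⟩ := h
  refine ⟨⟨by simp, ?_, List.isChain_append.2 ⟨hch, .singleton _, ?_⟩⟩, ?_, by simp⟩
  · exact List.concat_eq_append ▸ (List.nodup_concat p x).2 ⟨hx, hnd⟩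
  · simpa [hlast] using hbx
  · cases p <;> simp_all

lemma ReachIn.exists_isDipathFromTo (h : ReachIn R S a b) :
    ∃ p, IsDipathFromTo R p a b ∧ ∀ x ∈ p, x = a ∨ x ∈ S := by
  induction h with
  | refl => exact ⟨[a], ⟨⟨by simp, List.nodup_singleton _, .singleton _⟩, rfl, rfl⟩, by simp⟩
  | @tail b x _ hbx ih =>
    obtain ⟨p, hp, hpS⟩ := ih
    by_cases hx : x ∈ p
    · obtain ⟨q, t, rfl⟩ := List.append_of_mem hx
      refine ⟨q ++ [x], hp.prefix, fun y hy => hpS y ?_⟩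
      simp only [List.mem_append, List.mem_cons] at hy ⊢
      tauto
    · refine ⟨p ++ [x], hp.concat hbx.1 hx, fun y hy => ?_⟩
      rcases List.mem_append.1 hy with hy | hy
      · exact hpS y hy
      · exact .inr (List.mem_singleton.1 hy ▸ hbx.2.2)

end Paths

/-- `U(T)` for a vertex set `T`, so that `U(i) = dominated R r {i}` for `i ≠ r`. -/
noncomputable def dominated {c : ℕ} (R : Finset (Fin c × Fin c)) (r : Fin c)
    (T : Finset (Fin c)) : Finset (Fin c) :=
  @Finset.filter _ (fun k => ¬ ReachIn R (univ \ T) k r) (Classical.decPred _) univ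

section Dominated

variable {c : ℕ} {R : Finset (Fin c × Fin c)} {r i k s t : Fin c} {T T' : Finset (Fin c)}

lemma mem_dominated : k ∈ dominated R r T ↔ ¬ ReachIn R (univ \ T) k r := by
  simp [dominated]

lemma ne_of_mem_dominated (hk : k ∈ dominated R r T) : k ≠ r := by
  rintro rfl
  exact mem_dominated.1 hk .refl

lemma subset_dominated (hr : r ∉ T) : T ⊆ dominated R r T := fun t ht =>
  mem_dominated.2 fun w => hr (w.eq_of_notMem (by simpa using ht) ▸ ht)

lemma dominated_mono (h : T ⊆ T') : dominated R r T ⊆ dominated R r T' := fun _ hk =>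
  mem_dominated.2 fun w => mem_dominated.1 hk (w.mono (sdiff_subset_sdiff subset_rfl h))

lemma mem_dominated_of_reachIn (hk : k ∈ dominated R r T) (h : ReachIn R (univ \ T) k t) :
    t ∈ dominated R r T :=
  mem_dominated.2 fun w => mem_dominated.1 hk (h.trans w)

lemma dominated_singleton_subset (hs : s ∈ dominated R r T) :
    dominated R r {s} ⊆ dominated R r T := by
  intro k hk
  refine mem_dominated.2 fun w => ?_
  obtain ⟨z, hz, -, hzr⟩ := reachIn_split w fun w' =>
    mem_dominated.1 hk (w'.mono (sdiff_subset_sdiff (subset_univ _) subset_rfl))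
  rw [mem_singleton] at hz
  exact mem_dominated.1 hs (hz ▸ hzr)

/-- `t` is the first vertex of `T` on a walk from `k` to `r`. -/
lemma exists_mem_reachIn_dominated (hkr : Reach R k r) (hk : k ∈ dominated R r T) :
    ∃ t ∈ T, ReachIn R (insert t (dominated R r T \ T)) k t := by
  induction hkr using Relation.ReflTransGen.head_induction_on with
  | refl => exact absurd rfl (ne_of_mem_dominated hk)
  | @head a x hax _ ih =>
    by_cases haT : a ∈ T
    · exact ⟨a, haT, .refl⟩
    by_cases hxT : x ∈ T
    · exact ⟨x, hxT, .single ⟨hax, mem_insert_of_mem (mem_sdiff.2 ⟨hk, haT⟩),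
        mem_insert_self _ _⟩⟩
    have hx : x ∈ dominated R r T :=
      mem_dominated_of_reachIn hk (.single ⟨hax, by simpa using haT, by simpa using hxT⟩)
    obtain ⟨t, ht, hxt⟩ := ih hx
    exact ⟨t, ht, .head ⟨hax, mem_insert_of_mem (mem_sdiff.2 ⟨hk, haT⟩),
      mem_insert_of_mem (mem_sdiff.2 ⟨hx, hxT⟩)⟩ hxt⟩

lemma reach_of_mem_dominated_singleton (hkr : Reach R k r) (hk : k ∈ dominated R r {s}) :
    Reach R k s := by
  obtain ⟨t, ht, hkt⟩ := exists_mem_reachIn_dominated hkr hk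
  exact mem_singleton.1 ht ▸ hkt.reach

lemma reachIn_compl_dominated (h : ReachIn R (univ \ T) k r) :
    ReachIn R (univ \ dominated R r T) k r := by
  induction h using Relation.ReflTransGen.head_induction_on with
  | refl => exact .refl
  | @head a x hax hxr ih =>
    have hnot : ∀ y, ReachIn R (univ \ T) y r → y ∈ univ \ dominated R r T := fun y hy =>
      mem_sdiff.2 ⟨mem_univ _, fun hd => mem_dominated.1 hd hy⟩
    exact .head ⟨hax.1, hnot a (.head hax hxr), hnot x hxr⟩ ih

lemma mem_uset : k ∈ Uset R r i ↔ ∀ p, IsDipathFromTo R p k r → i ∈ p := by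
  simp [Uset]

lemma uset_eq_dominated (hi : i ≠ r) : Uset R r i = dominated R r {i} := by
  ext k
  rw [mem_uset, mem_dominated]
  constructor
  · intro hk w
    obtain ⟨p, hp, hpS⟩ := w.exists_isDipathFromTo
    rcases hpS i (hk p hp) with rfl | hi'
    · exact hi (w.eq_of_notMem (by simp))
    · simp at hi'
  · intro hk p hp
    by_contra hip
    exact hk (hp.reachIn fun x hx => by simpa using ne_of_mem_of_not_mem hx hip)

end Dominated

section Dominators

variable {c : ℕ} {R : Finset (Fin c × Fin c)} {r i₁ i₂ k : Fin c}

lemma self_mem_uset : i₁ ∈ Uset R r i₁ :=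
  mem_uset.2 fun _ hp => List.mem_of_mem_head? hp.2.1

lemma uset_subset_of_mem (h₂ : i₂ ≠ r) (h : i₁ ∈ Uset R r i₂) : Uset R r i₁ ⊆ Uset R r i₂ := by
  rw [uset_eq_dominated h₂] at h ⊢
  rw [uset_eq_dominated (ne_of_mem_dominated h)]
  exact dominated_singleton_subset h

lemma mem_uset_or_mem_uset (hkr : Reach R k r) (h₁ : i₁ ≠ r) (h₂ : i₂ ≠ r)
    (hk₁ : k ∈ Uset R r i₁) (hk₂ : k ∈ Uset R r i₂) :
    i₁ ∈ Uset R r i₂ ∨ i₂ ∈ Uset R r i₁ := by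
  by_cases heq : i₁ = i₂
  · exact .inl (heq ▸ self_mem_uset)
  rw [uset_eq_dominated h₁, uset_eq_dominated h₂] at *
  -- a walk from `k` to `r` avoids the other vertex until it first meets `i₁` or `i₂`
  obtain ⟨t, ht, hkt⟩ :=
    exists_mem_reachIn_dominated hkr (dominated_mono (by simp) hk₁ : k ∈ dominated R r {i₁, i₂})
  rcases mem_insert.1 ht with rfl | ht
  · refine .inl (mem_dominated_of_reachIn hk₂ (hkt.mono fun x hx => ?_))
    simp only [mem_insert, mem_sdiff, mem_singleton, mem_univ, true_and] at hx ⊢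
    grind
  · rw [mem_singleton] at ht
    subst ht
    refine .inr (mem_dominated_of_reachIn hk₁ (hkt.mono fun x hx => ?_))
    simp only [mem_insert, mem_sdiff, mem_singleton, mem_univ, true_and] at hx ⊢
    grind

lemma eq_of_mem_uset_of_mem_uset (hr : Reach R i₁ r) (h₁₂ : i₁ ∈ Uset R r i₂)
    (h₂₁ : i₂ ∈ Uset R r i₁) : i₁ = i₂ := by
  obtain ⟨p, hp, -⟩ := hr.reachIn_univ.exists_isDipathFromTo
  obtain ⟨q, t, rfl⟩ := List.append_of_mem (mem_uset.1 h₁₂ p hp)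
  have hi₁ : i₁ ∈ i₂ :: t := mem_uset.1 h₂₁ _ hp.suffix
  obtain ⟨⟨-, hnd, -⟩, hhd, -⟩ := hp
  cases q with
  | nil => simpa using hhd.symm
  | cons w q =>
    obtain rfl : w = i₁ := by simpa using hhd
    exact absurd (List.mem_append_right q hi₁) (List.nodup_cons.1 hnd).1

end Dominators

section Partitions

variable {c : ℕ} {R : Finset (Fin c × Fin c)} {r : Fin c} {U E I J : Finset (Fin c)}

/-- The witness consists of the maximal elements of `E` for the dominator order. -/
lemma exists_isPartitionInto (hreach : ∀ k, Reach R k r) (hrE : r ∉ E)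
    (hE : ∀ s ∈ E, Uset R r s ⊆ E) : ∃ I, IsPartitionInto R r E I := by
  classical
  have hne : ∀ s ∈ E, s ≠ r := fun s hs h => hrE (h ▸ hs)
  set I := E.filter fun m => ∀ m' ∈ E, m ∈ Uset R r m' → m' = m
  have hIE : I ⊆ E := filter_subset _ _
  have cover : ∀ s ∈ E, ∃ m ∈ I, s ∈ Uset R r m := by
    intro s hs
    obtain ⟨m, hm, hmax⟩ := (E.filter (s ∈ Uset R r ·)).exists_max_image (fun m => #(Uset R r m))
      ⟨s, mem_filter.2 ⟨hs, self_mem_uset⟩⟩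
    rw [mem_filter] at hm
    refine ⟨m, mem_filter.2 ⟨hm.1, fun m' hm' hmm' => ?_⟩, hm.2⟩
    have hsub := uset_subset_of_mem (hne m' hm') hmm'
    have heq := eq_of_subset_of_card_le hsub (hmax m' (mem_filter.2 ⟨hm', hsub hm.2⟩))
    exact eq_of_mem_uset_of_mem_uset (hreach m') (heq ▸ self_mem_uset) hmm'
  refine ⟨I, fun m hm => mem_erase.2 ⟨hne m (hIE hm), mem_univ _⟩, ?_, ?_⟩
  · intro m₁ h₁ m₂ h₂ hne₁₂
    refine disjoint_left.2 fun k hk₁ hk₂ => ?_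
    rcases mem_uset_or_mem_uset (hreach k) (hne m₁ (hIE h₁)) (hne m₂ (hIE h₂)) hk₁ hk₂ with h | h
    · exact hne₁₂ ((mem_filter.1 h₁).2 m₂ (hIE h₂) h).symm
    · exact hne₁₂ ((mem_filter.1 h₂).2 m₁ (hIE h₁) h)
  · ext k
    simp only [mem_biUnion]
    exact ⟨cover k, fun ⟨m, hm, hk⟩ => hE m (hIE hm) hk⟩

lemma IsPartitionInto.union (hI : IsPartitionInto R r U I) (hJ : IsPartitionInto R r E J)
    (hUE : Disjoint U E) : IsPartitionInto R r (U ∪ E) (I ∪ J) := by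
  obtain ⟨hIr, hIdisj, rfl⟩ := hI
  obtain ⟨hJr, hJdisj, rfl⟩ := hJ
  refine ⟨union_subset hIr hJr, ?_, (union_biUnion ..).symm⟩
  rw [coe_union, Set.pairwiseDisjoint_union]
  exact ⟨hIdisj, hJdisj, fun i hi j hj _ =>
    hUE.mono (subset_biUnion_of_mem _ hi) (subset_biUnion_of_mem _ hj)⟩

end Partitions

section StrongComponents

variable {c : ℕ} {R : Finset (Fin c × Fin c)} {r j a b : Fin c}

lemma mem_scc : a ∈ SCC R j ↔ Reach R j a ∧ Reach R a j := by
  simp [SCC]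

lemma mem_scc_self : j ∈ SCC R j :=
  mem_scc.2 ⟨.refl, .refl⟩

lemma reachIn_scc (ha : a ∈ SCC R j) (hb : b ∈ SCC R j) : ReachIn R (SCC R j) a b := by
  obtain ⟨hja, haj⟩ := mem_scc.1 ha
  obtain ⟨hjb, hbj⟩ := mem_scc.1 hb
  have hab : Reach R a b := haj.trans hjb
  clear ha haj
  induction hab using Relation.ReflTransGen.head_induction_on with
  | refl => exact .refl
  | @head a x hax hxb ih =>
    have hjx : Reach R j x := hja.tail hax
    have hxj : Reach R x j := hxb.trans hbj
    exact .head ⟨hax, mem_scc.2 ⟨hja, hxj.head hax⟩, mem_scc.2 ⟨hjx, hxj⟩⟩ (ih hjx)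

lemma notMem_scc_of_absorbing (habs : ∀ p ∈ R, p.1 ≠ r) (hj : j ≠ r) : r ∉ SCC R j := by
  intro hr
  rcases Relation.ReflTransGen.cases_head (mem_scc.1 hr).2 with h | ⟨_, hrx, _⟩
  · exact hj h.symm
  · exact habs _ hrx rfl

end StrongComponents

namespace Jinarb

variable {c : ℕ} {R : Finset (Fin c × Fin c)} {r j j' k₀ s : Fin c} {T U : Finset (Fin c)}

lemma notMem (hU : Jinarb R r j U) : r ∉ U := fun h => by simpa using hU.1 h

lemma exists_reach_of_mem_dominated (hU : Jinarb R r j U) (hs : s ∈ dominated R r (U ∪ T))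
    (hsU : s ∉ U) : ∃ t ∈ T, Reach R s t := by
  have hw : ReachIn R (univ \ U) s r :=
    hU.2.2 s (mem_sdiff.2 ⟨mem_erase.2 ⟨ne_of_mem_dominated hs, mem_univ _⟩, hsU⟩)
  obtain ⟨t, ht, hst, -⟩ := reachIn_split hw (by
    rw [sdiff_sdiff_left, sup_eq_union]
    exact mem_dominated.1 hs)
  exact ⟨t, ht, hst.reach⟩

lemma dominated_union_scc (hreach : ∀ k, Reach R k r) (hU : Jinarb R r j U)
    (hrS : r ∉ SCC R j) (hj' : j' ∈ SCC R j) :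
    Jinarb R r j' (dominated R r (U ∪ SCC R j)) := by
  set D := dominated R r (U ∪ SCC R j)
  have hTD : U ∪ SCC R j ⊆ D := subset_dominated (by simp [hU.notMem, hrS])
  have hSj' : ∀ t ∈ SCC R j, ReachIn R D t j' := fun t ht =>
    (reachIn_scc ht hj').mono (subset_union_right.trans hTD)
  refine ⟨fun k hk => mem_erase.2 ⟨ne_of_mem_dominated hk, mem_univ _⟩, fun k hk => ?_,
    fun k hk => ?_⟩
  · obtain ⟨t, ht, hkt⟩ := exists_mem_reachIn_dominated (hreach k) hk
    have hkt' : ReachIn R D k t := hkt.mono (insert_subset (hTD ht) sdiff_subset)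
    rcases mem_union.1 ht with htU | htS
    · exact hkt'.trans (((hU.2.1 t htU).mono (subset_union_left.trans hTD)).trans
        (hSj' j mem_scc_self))
    · exact hkt'.trans (hSj' t htS)
  · rw [mem_sdiff, mem_dominated, not_not] at hk
    exact reachIn_compl_dominated hk.2

/-- A vertex of `U` dominated by `s ∉ U` would force `s ∈ C''(j)`, and then the arc `(j, k₀)`
would not leave `C''(j)`. -/
lemma uset_subset_dominated_sdiff (hreach : ∀ k, Reach R k r) (hU : Jinarb R r j U)
    (hjk₀ : (j, k₀) ∈ R) (hk₀ : k₀ ∉ SCC R j) (hs : s ∈ dominated R r (U ∪ SCC R j) \ U) :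
    Uset R r s ⊆ dominated R r (U ∪ SCC R j) \ U := by
  obtain ⟨hsD, hsU⟩ := mem_sdiff.1 hs
  rw [uset_eq_dominated (ne_of_mem_dominated hsD)]
  intro k hk
  refine mem_sdiff.2 ⟨dominated_singleton_subset hsD hk, fun hkU => hk₀ ?_⟩
  have hUs : U ⊆ univ \ {s} := fun u hu => by simpa using ne_of_mem_of_not_mem hu hsU
  have hjU : j ∈ U := (hU.2.1 k hkU).mem_of_mem hkU
  have hj : j ∈ dominated R r {s} := mem_dominated_of_reachIn hk ((hU.2.1 k hkU).mono hUs)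
  have hsS : s ∈ SCC R j := by
    obtain ⟨t, ht, hst⟩ := hU.exists_reach_of_mem_dominated hsD hsU
    exact mem_scc.2 ⟨reach_of_mem_dominated_singleton (hreach j) hj,
      hst.trans (mem_scc.1 ht).2⟩
  have hk₀s : k₀ ∈ dominated R r {s} := mem_dominated_of_reachIn hj
    (.single ⟨hjk₀, hUs hjU, by simpa using ne_of_mem_of_not_mem hsS hk₀ |>.symm⟩)
  exact mem_scc.2 ⟨.single hjk₀,
    (reach_of_mem_dominated_singleton (hreach k₀) hk₀s).trans (mem_scc.1 hsS).2⟩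

end Jinarb

theorem stmt16_general {c : ℕ}
    (R : Finset (Fin c × Fin c))
    -- `{r} = C'` is the vertex set of the unique absorbing strong component (`ℓ = t = 1`):
    (r : Fin c)
    (habs : ∀ p ∈ R, p.1 ≠ r)
    (hreach : ∀ k : Fin c, Reach R k r)
    (j : Fin c) (hj : j ≠ r)
    -- some arc with tail `j` leaves the strong component `C''(j)` containing `j`:
    (hout : (arcsOut R {j} ∩ arcsOut R (SCC R j)).Nonempty) :
    ∀ j' ∈ SCC R j, Wset R r j ⊆ Wset R r j' := by
  obtain ⟨⟨a, k₀⟩, hout⟩ := hout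
  simp only [arcsOut, mem_inter, mem_filter, mem_singleton] at hout
  obtain ⟨⟨hjk₀, haj, -⟩, -, -, hk₀⟩ := hout
  subst a
  rintro j' hj' i ⟨U, I, hU, hI, hi⟩
  have hrS := notMem_scc_of_absorbing habs hj
  set D := dominated R r (U ∪ SCC R j)
  have hUD : U ⊆ D := subset_union_left.trans (subset_dominated (by simp [hU.notMem, hrS]))
  obtain ⟨J, hJ⟩ := exists_isPartitionInto hreach
    (fun h => ne_of_mem_dominated (sdiff_subset h) rfl)
    fun _ => hU.uset_subset_dominated_sdiff hreach hjk₀ hk₀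
  refine ⟨D, I ∪ J, hU.dominated_union_scc hreach hrS hj', ?_, mem_union_left _ hi⟩
  rw [← union_sdiff_of_subset hUD]
  exact hI.union hJ disjoint_sdiff

theorem stmt16 {c : ℕ}
    (R : Finset (Fin c × Fin c)) (hloop : ∀ v : Fin c, (v, v) ∉ R)
    -- `{r} = C'` is the vertex set of the unique absorbing strong component (`ℓ = t = 1`):
    (r : Fin c)
    (habs : ∀ p ∈ R, p.1 ≠ r)
    (hreach : ∀ k : Fin c, Reach R k r)
    (hweak : ∀ a b : Fin c,
      Relation.ReflTransGen (fun x y => (x, y) ∈ R ∨ (y, x) ∈ R) a b)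
    (hnsc : ¬ ∀ a b : Fin c, Reach R a b)
    (j : Fin c) (hj : j ≠ r)
    -- some arc with tail `j` leaves the strong component `C''(j)` containing `j`:
    (hout : (arcsOut R {j} ∩ arcsOut R (SCC R j)).Nonempty) :
    ∀ j' ∈ SCC R j, Wset R r j ⊆ Wset R r j' :=
  stmt16_general R r habs hreach j hj hout
end
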